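/- arXiv:0810.3209 — 3 statements merged into one kernel-verified Lean document; each statement's English description precedes it below -/
import Mathlib

section
/- Let r ≥ 1 and let k₁,…,k_r and n₁,…,n_r be integers with k₁+⋯+k_r = n₁+⋯+n_r. Let 𝓘 be the family of subsets A of {1,…,r} with A ≠ ∅, A ≠ {1,…,r}, and ∑_{i∈A} k_i ≤ ∑_{i∈A} n_i. Then ∑_{l≥0} ∑_{chains C₁⊊⋯⊊C_l in 𝓘} (-1)^l equals (-1)^{r-1} if (k₁,…,k_r) = (n₁,…,n_r), and 0 otherwise. -/
/-!
Call `I` a cone with apex `p` if `{p} ∈ I` and `insert p A ∈ I` for every `A ∈ I` avoiding `p`.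
The chain sum of a cone vanishes: toggling the pivot of a chain (the smallest set containing `p`
comparable with all its members) is a sign-reversing involution on the chains of `I`.

If `k ≠ n`, pick `p` with `k p < n p`; the family is a cone with apex `p`. If `k = n`, the family
consists of all nonempty proper subsets of `u = Fin r`. Removing the coatom `u \ {p}` leaves a
cone, and the chains through the coatom are those of the nonempty proper subsets of `u \ {p}`,
each extended by one set, so the chain sum changes sign whenever `u` grows by a point.
-/

open Finset
open scoped Classical

/-- The alternating sum `∑_{l ≥ 0} ∑_{chains C₁ ⊊ ⋯ ⊊ C_l in I} (-1)^l`, where a chain is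
identified with the subset `T ⊆ I` of its members (totally ordered by inclusion) and has
length `T.card`; the empty chain (`l = 0`) contributes `+1`. -/
noncomputable def chainSum {β : Type*} (I : Finset (Finset β)) : ℤ :=
  ∑ T ∈ I.powerset.filter (fun T => ∀ a ∈ T, ∀ b ∈ T, a ⊆ b ∨ b ⊆ a),
    (-1 : ℤ) ^ T.card

theorem Finset.sup_id_eq_bot_or_mem_of_comparable {α : Type*} [SemilatticeSup α] [OrderBot α]
    {C : Finset α} (hC : ∀ a ∈ C, ∀ b ∈ C, a ≤ b ∨ b ≤ a) : C.sup id = ⊥ ∨ C.sup id ∈ C := by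
  refine sup_mem {x | x = ⊥ ∨ x ∈ C} (Or.inl rfl) ?_ C id fun a ha => Or.inr ha
  rintro a (rfl | ha) b (rfl | hb)
  · simp
  · simpa using Or.inr hb
  · simpa using Or.inr ha
  · rcases hC a ha b hb with h | h
    · simpa [sup_of_le_right h] using Or.inr hb
    · simpa [sup_of_le_left h] using Or.inr ha

section Chains

variable {β : Type*}

noncomputable def chains (I : Finset (Finset β)) : Finset (Finset (Finset β)) :=
  I.powerset.filter fun T => ∀ a ∈ T, ∀ b ∈ T, a ⊆ b ∨ b ⊆ a

theorem chainSum_eq_sum_chains (I : Finset (Finset β)) :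
    chainSum I = ∑ T ∈ chains I, (-1 : ℤ) ^ T.card := rfl

theorem mem_chains {I T : Finset (Finset β)} :
    T ∈ chains I ↔ T ⊆ I ∧ ∀ a ∈ T, ∀ b ∈ T, a ⊆ b ∨ b ⊆ a := by
  simp [chains]

theorem chainSum_empty : chainSum (∅ : Finset (Finset β)) = 1 := by
  simp [chainSum_eq_sum_chains, chains, filter_singleton]

end Chains

section Cone

variable {β : Type*} [DecidableEq β]

/-- The smallest set containing `p` that is comparable with every member of the chain `T`. -/
def pivot (p : β) (T : Finset (Finset β)) : Finset β :=
  insert p ((T.filter (p ∉ ·)).sup id)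

theorem mem_pivot (p : β) (T : Finset (Finset β)) : p ∈ pivot p T :=
  mem_insert_self _ _

variable {p : β} {T : Finset (Finset β)}

theorem pivot_eq_singleton_or_exists (hT : ∀ a ∈ T, ∀ b ∈ T, a ⊆ b ∨ b ⊆ a) :
    pivot p T = {p} ∨ ∃ A ∈ T, p ∉ A ∧ pivot p T = insert p A := by
  rcases sup_id_eq_bot_or_mem_of_comparable (C := T.filter (p ∉ ·))
      (fun a ha b hb => hT a (mem_filter.1 ha).1 b (mem_filter.1 hb).1) with h | h
  · left
    rw [pivot, h, bot_eq_empty, insert_empty]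
  · obtain ⟨hT, hp⟩ := mem_filter.1 h
    exact Or.inr ⟨_, hT, hp, rfl⟩

theorem subset_pivot_or_pivot_subset (hT : ∀ a ∈ T, ∀ b ∈ T, a ⊆ b ∨ b ⊆ a) {B : Finset β}
    (hB : B ∈ T) : B ⊆ pivot p T ∨ pivot p T ⊆ B := by
  by_cases hpB : p ∈ B
  · refine Or.inr (insert_subset hpB (Finset.sup_le fun C hC => ?_))
    obtain ⟨hCT, hpC⟩ := mem_filter.1 hC
    exact (hT C hCT B hB).resolve_right fun hBC => hpC (hBC hpB)
  · exact Or.inl ((le_sup (f := id) (mem_filter.2 ⟨hB, hpB⟩)).trans (subset_insert _ _))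

def togglePivot (p : β) (T : Finset (Finset β)) : Finset (Finset β) :=
  if pivot p T ∈ T then T.erase (pivot p T) else insert (pivot p T) T

theorem pivot_togglePivot : pivot p (togglePivot p T) = pivot p T := by
  have : (togglePivot p T).filter (p ∉ ·) = T.filter (p ∉ ·) := by
    unfold togglePivot
    split_ifs
    · rw [filter_erase, erase_eq_of_notMem (by simp [mem_pivot])]
    · rw [filter_insert, if_neg (not_not_intro (mem_pivot p T))]
  rw [pivot, this, pivot]

theorem togglePivot_togglePivot : togglePivot p (togglePivot p T) = T := by
  by_cases h : pivot p T ∈ T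
  · rw [togglePivot, pivot_togglePivot, togglePivot, if_pos h, if_neg (notMem_erase _ _),
      insert_erase h]
  · rw [togglePivot, pivot_togglePivot, togglePivot, if_neg h, if_pos (mem_insert_self _ _),
      erase_insert h]

theorem togglePivot_ne_self : togglePivot p T ≠ T := by
  unfold togglePivot
  split_ifs with h
  · exact erase_ne_self.2 h
  · exact insert_ne_self.2 h

theorem neg_one_pow_card_togglePivot :
    (-1 : ℤ) ^ (togglePivot p T).card = -(-1) ^ T.card := by
  unfold togglePivot
  split_ifs with h
  · rw [← card_erase_add_one h, pow_succ, mul_neg_one, neg_neg]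
  · rw [card_insert_of_notMem h, pow_succ, mul_neg_one]

theorem togglePivot_mem_chains {I : Finset (Finset β)} (hT : T ∈ chains I)
    (hpivot : pivot p T ∈ I) : togglePivot p T ∈ chains I := by
  obtain ⟨hTI, hchain⟩ := mem_chains.1 hT
  unfold togglePivot
  split_ifs
  · exact mem_chains.2 ⟨(erase_subset _ _).trans hTI,
      fun a ha b hb => hchain a (mem_of_mem_erase ha) b (mem_of_mem_erase hb)⟩
  · refine mem_chains.2 ⟨insert_subset hpivot hTI, ?_⟩
    simp only [mem_insert, forall_eq_or_imp, subset_refl, true_or, true_and]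
    exact ⟨fun b hb => (subset_pivot_or_pivot_subset hchain hb).symm,
      fun a ha => ⟨subset_pivot_or_pivot_subset hchain ha, fun b hb => hchain a ha b hb⟩⟩

theorem chainSum_eq_zero_of_cone {I : Finset (Finset β)} (hp : {p} ∈ I)
    (hI : ∀ A ∈ I, p ∉ A → insert p A ∈ I) : chainSum I = 0 := by
  have hpivot : ∀ T ∈ chains I, pivot p T ∈ I := fun T hT => by
    obtain ⟨hTI, hchain⟩ := mem_chains.1 hT
    obtain h | ⟨A, hA, hpA, h⟩ := pivot_eq_singleton_or_exists (p := p) hchain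
    · exact h ▸ hp
    · exact h ▸ hI A (hTI hA) hpA
  rw [chainSum_eq_sum_chains]
  refine sum_involution (fun T _ => togglePivot p T) (fun T _ => ?_) (fun T _ _ => ?_)
    (fun T hT => togglePivot_mem_chains hT (hpivot T hT)) (fun T _ => togglePivot_togglePivot)
  · rw [neg_one_pow_card_togglePivot, add_neg_cancel]
  · exact togglePivot_ne_self

end Cone

section Deletion

variable {β : Type*} [DecidableEq β] {I : Finset (Finset β)} {M : Finset β}

theorem filter_notMem_chains : (chains I).filter (M ∉ ·) = chains (I.erase M) := by
  ext T
  simp only [mem_filter, mem_chains, subset_erase]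
  tauto

theorem sum_chains_filter_mem_of_maximal (hM : M ∈ I) (hmax : ∀ A ∈ I, M ⊆ A → A = M) :
    ∑ T ∈ (chains I).filter (M ∈ ·), (-1 : ℤ) ^ T.card = -chainSum (I.filter (· ⊂ M)) := by
  rw [chainSum_eq_sum_chains, ← sum_neg_distrib]
  refine sum_nbij' (fun T => T.erase M) (insert M) (fun T hT => ?_) (fun T hT => ?_)
    (fun T hT => insert_erase (mem_filter.1 hT).2) (fun T hT => erase_insert fun hMT => ?_)
    (fun T hT => ?_)
  · obtain ⟨hTI, hchain⟩ := mem_chains.1 (mem_filter.1 hT).1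
    refine mem_chains.2 ⟨fun A hA => ?_, fun a ha b hb =>
      hchain a (mem_of_mem_erase ha) b (mem_of_mem_erase hb)⟩
    obtain ⟨hAM, hAT⟩ := mem_erase.1 hA
    have hcomp := hchain A hAT M (mem_filter.1 hT).2
    refine mem_filter.2 ⟨hTI hAT, ssubset_of_subset_of_ne ?_ hAM⟩
    exact hcomp.resolve_right fun hMA => hAM (hmax A (hTI hAT) hMA)
  · obtain ⟨hTI, hchain⟩ := mem_chains.1 hT
    have hbelow : ∀ A ∈ T, A ⊆ M := fun A hA => (mem_filter.1 (hTI hA)).2.subset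
    refine mem_filter.2 ⟨mem_chains.2 ⟨insert_subset hM fun A hA => (mem_filter.1 (hTI hA)).1,
      ?_⟩, mem_insert_self _ _⟩
    simp only [mem_insert, forall_eq_or_imp, subset_refl, true_or, true_and]
    exact ⟨fun b hb => Or.inr (hbelow b hb), fun a ha => ⟨Or.inl (hbelow a ha), hchain a ha⟩⟩
  · exact (mem_filter.1 ((mem_chains.1 hT).1 hMT)).2.ne rfl
  · rw [← card_erase_add_one (mem_filter.1 hT).2, pow_succ, mul_neg_one]

theorem chainSum_eq_chainSum_erase_sub (hM : M ∈ I) (hmax : ∀ A ∈ I, M ⊆ A → A = M) :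
    chainSum I = chainSum (I.erase M) - chainSum (I.filter (· ⊂ M)) := by
  rw [chainSum_eq_sum_chains, ← sum_filter_not_add_sum_filter (chains I) (M ∈ ·),
    filter_notMem_chains, sum_chains_filter_mem_of_maximal hM hmax,
    chainSum_eq_sum_chains (I.erase M), sub_eq_add_neg]

end Deletion

section NonemptyProperSubsets

variable {β : Type*} [DecidableEq β] {a : β} {s : Finset β}

theorem mem_ssubsets_erase_empty {u A : Finset β} : A ∈ u.ssubsets.erase ∅ ↔ A ≠ ∅ ∧ A ⊂ u := by
  rw [mem_erase, mem_ssubsets]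

theorem chainSum_ssubsets_insert_erase_empty_erase (ha : a ∉ s) (hs : s.Nonempty) :
    chainSum (((insert a s).ssubsets.erase ∅).erase s) = 0 := by
  have insert_mem {A} (hA : A ⊆ s) (hAs : A ≠ s) :
      insert a A ∈ ((insert a s).ssubsets.erase ∅).erase s := by
    have hssubset : insert a A ⊂ insert a s :=
      ssubset_of_subset_of_ne (insert_subset_insert a hA) fun h => hAs <| by
        rw [← erase_insert fun haA => ha (hA haA), h, erase_insert ha]
    exact mem_erase.2 ⟨fun h => ha (h ▸ mem_insert_self a A),
      mem_ssubsets_erase_empty.2 ⟨insert_ne_empty a A, hssubset⟩⟩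
  refine chainSum_eq_zero_of_cone (p := a) (insert_mem (empty_subset s) hs.ne_empty.symm)
    fun A hA haA => ?_
  obtain ⟨hAs, hA⟩ := mem_erase.1 hA
  exact insert_mem ((subset_insert_iff_of_notMem haA).1
    (mem_ssubsets_erase_empty.1 hA).2.subset) hAs

theorem chainSum_ssubsets_erase_empty {u : Finset β} (hu : u.Nonempty) :
    chainSum (u.ssubsets.erase ∅) = (-1) ^ (u.card - 1) := by
  induction hu using Nonempty.cons_induction with
  | singleton a =>
    have : ({a} : Finset β).ssubsets.erase ∅ = ∅ := by
      ext A
      simp [ssubset_singleton_iff]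
    rw [this, chainSum_empty, card_singleton, Nat.sub_self, pow_zero]
  | cons a s ha hs ih =>
    rw [cons_eq_insert]
    have hs_mem : s ∈ (insert a s).ssubsets.erase ∅ :=
      mem_ssubsets_erase_empty.2 ⟨hs.ne_empty, ssubset_insert ha⟩
    have hmax : ∀ A ∈ (insert a s).ssubsets.erase ∅, s ⊆ A → A = s := by
      intro A hA hsA
      have hA := (mem_ssubsets_erase_empty.1 hA).2
      refine (hsA.antisymm fun x hx => ?_).symm
      obtain rfl | hxs := mem_insert.1 (hA.subset hx)
      · exact absurd (insert_subset hx hsA) hA.not_subset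
      · exact hxs
    have hbelow : ((insert a s).ssubsets.erase ∅).filter (· ⊂ s) = s.ssubsets.erase ∅ := by
      ext A
      simp only [mem_filter, mem_ssubsets_erase_empty]
      exact ⟨fun h => ⟨h.1.1, h.2⟩, fun h => ⟨⟨h.1, h.2.trans (ssubset_insert ha)⟩, h.2⟩⟩
    rw [chainSum_eq_chainSum_erase_sub hs_mem hmax,
      chainSum_ssubsets_insert_erase_empty_erase ha hs, hbelow, ih, card_insert_of_notMem ha,
      Nat.add_sub_cancel, zero_sub, ← neg_one_mul, ← pow_succ', Nat.sub_add_cancel hs.card_pos]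

end NonemptyProperSubsets

/-- Let `r ≥ 1` and `k₁,…,k_r`, `n₁,…,n_r` be integers with equal total sums. For the family
`I` of proper non-empty subsets `A` of `{1,…,r}` with `∑_{i∈A} k_i ≤ ∑_{i∈A} n_i`, the
alternating chain sum `∑_{l≥0} ∑_{chains of length l in I} (-1)^l` equals `(-1)^{r-1}` if
`(k₁,…,k_r) = (n₁,…,n_r)` and `0` otherwise. -/
theorem chainSum_subset_family (r : ℕ) (hr : 1 ≤ r) (k n : Fin r → ℤ)
    (hsum : ∑ i, k i = ∑ i, n i) :
    chainSum ((Finset.univ : Finset (Fin r)).powerset.filter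
        (fun A => A.Nonempty ∧ A ≠ Finset.univ ∧ ∑ i ∈ A, k i ≤ ∑ i ∈ A, n i))
      = if k = n then (-1 : ℤ) ^ (r - 1) else 0 := by
  set I := (Finset.univ : Finset (Fin r)).powerset.filter
    (fun A => A.Nonempty ∧ A ≠ Finset.univ ∧ ∑ i ∈ A, k i ≤ ∑ i ∈ A, n i)
  split_ifs with hkn
  · subst hkn
    have hI : I = (univ : Finset (Fin r)).ssubsets.erase ∅ := by
      ext A
      simp [I, ssubset_iff_subset_ne, nonempty_iff_ne_empty, and_comm]
    rw [hI, chainSum_ssubsets_erase_empty (univ_nonempty_iff.2 ⟨⟨0, hr⟩⟩), card_univ,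
      Fintype.card_fin]
  · obtain ⟨p, hp⟩ : ∃ p, k p < n p := by
      by_contra! hnk
      exact hkn (funext fun i =>
        ((sum_eq_sum_iff_of_le fun i _ => hnk i).1 hsum.symm i (mem_univ i)).symm)
    -- Adding `p` makes the inequality strict, so `insert p A` cannot be all of `Fin r`.
    have hcone : ∀ A, p ∉ A → ∑ i ∈ A, k i ≤ ∑ i ∈ A, n i → insert p A ∈ I := by
      intro A hpA hA
      have hlt : ∑ i ∈ insert p A, k i < ∑ i ∈ insert p A, n i := by
        rw [sum_insert hpA, sum_insert hpA]
        exact add_lt_add_of_lt_of_le hp hA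
      exact mem_filter.2 ⟨mem_powerset.2 (subset_univ _), insert_nonempty p A,
        fun h => hlt.ne (h ▸ hsum), hlt.le⟩
    exact chainSum_eq_zero_of_cone (insert_empty (a := p) ▸ hcone ∅ (notMem_empty p) le_rfl)
      fun A hA hpA => hcone A hpA (mem_filter.1 hA).2.2.2
end

section
/- Let σ₁, σ₂ ∈ S(k) with σ₁σ₂ = (1,2,…,k), and let q : C(σ₂) → {2,3,…} with ∑_{c∈C(σ₂)} q(c) = |C(σ₁)|+|C(σ₂)|. Then condition (e): 'for every non-trivial A ⊂ C(σ₂) (A ≠ ∅, A ≠ C(σ₂)), more than ∑_{i∈A}(q(i)−1) cycles of σ₁ intersect ⋃A' is equivalent to condition (e²): 'for every non-trivial A ⊂ C(σ₂) there exist two marriage arrangements M₁, M₂ : C(σ₁) → C(σ₂) (each girl j ∈ C(σ₂) has exactly q(j)−1 husbands, and each boy is married only to a girl whose cycle intersects his) with M₁⁻¹(A) ≠ M₂⁻¹(A)'. -/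
open Finset Equiv
open scoped Classical

/-- The cycle (orbit) of the point `x` under the permutation `σ`, as a set of points. -/
noncomputable def orbitOf {k : ℕ} (σ : Perm (Fin k)) (x : Fin k) : Finset (Fin k) :=
  Finset.univ.filter fun y => σ.SameCycle x y

/-- The set `C(σ)` of cycles of `σ`, each cycle represented by its set of points. -/
noncomputable def cyclesOf {k : ℕ} (σ : Perm (Fin k)) : Finset (Finset (Fin k)) :=
  Finset.univ.image (orbitOf σ)

/-- The number of cycles of `σ₁` which intersect `⋃ A`. -/
noncomputable def meetCount {k : ℕ} (σ₁ : Perm (Fin k))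
    (A : Finset (Finset (Fin k))) : ℕ :=
  ((cyclesOf σ₁).filter fun d => (d ∩ A.biUnion id).Nonempty).card

/-- A marriage arrangement: a map `M` assigning to each cycle (boy) of `σ₁` a cycle
(girl) of `σ₂` intersecting it, in such a way that each cycle `j` of `σ₂` has exactly
`q(j) − 1` husbands. -/
noncomputable def IsMarriage {k : ℕ} (σ₁ σ₂ : Perm (Fin k))
    (q : Finset (Fin k) → ℕ) (M : Finset (Fin k) → Finset (Fin k)) : Prop :=
  (∀ d ∈ cyclesOf σ₁, M d ∈ cyclesOf σ₂ ∧ (d ∩ M d).Nonempty) ∧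
  (∀ e ∈ cyclesOf σ₂, ((cyclesOf σ₁).filter fun d => M d = e).card = q e - 1)

/-!
Cycles of `σ₁` are boys, cycles of `σ₂` are girls, girl `j` offering `q j - 1` places, and a
boy may marry a girl whose cycle meets his. Any marriage sends exactly `∑_{j ∈ A} (q j - 1)` boys
into `A`, all of them among the boys meeting `⋃ A`; two marriages sending different sets of boys
into `A` therefore exhibit strictly more boys meeting `⋃ A`. Conversely, the strict surplus in (e)
leaves enough room in Hall's condition to marry any prescribed boy to any girl he meets and still
complete the marriage. Take one marriage `M₁`; by counting, some boy meeting `⋃ A` is not sent into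
`A` by `M₁`, and a marriage `M₂` forcing him into `A` is the second one.
-/

section Assignment

variable {α β : Type*} {s : Finset α} {t : Finset β} {r : α → β → Prop} {c : β → ℕ}

/-- `IsMarriage σ₁ σ₂ q` is the special case of the intersection relation between cycles with
capacities `q - 1`. -/
def IsAssignment [DecidableEq β] (s : Finset α) (t : Finset β) (r : α → β → Prop) (c : β → ℕ)
    (f : α → β) : Prop :=
  (∀ x ∈ s, f x ∈ t ∧ r x (f x)) ∧ ∀ y ∈ t, #{x ∈ s | f x = y} = c y

lemma IsAssignment.card_filter_mem [DecidableEq β] {f : α → β} (hf : IsAssignment s t r c f)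
    {A : Finset β} (hA : A ⊆ t) : #{x ∈ s | f x ∈ A} = ∑ y ∈ A, c y := by
  rw [← sum_card_fiberwise_eq_card_filter]
  exact sum_congr rfl fun y hy => hf.2 y (hA hy)

lemma IsAssignment.filter_mem_subset [DecidableEq β] [DecidableRel r] {f : α → β}
    (hf : IsAssignment s t r c f) (A : Finset β) :
    {x ∈ s | f x ∈ A} ⊆ {x ∈ s | ∃ y ∈ A, r x y} := by
  intro x hx
  rw [mem_filter] at hx ⊢
  exact ⟨hx.1, f x, hx.2, (hf.1 x hx.1).2⟩

lemma isAssignment_of_card_le [DecidableEq β] {f : α → β} (hf : ∀ x ∈ s, f x ∈ t ∧ r x (f x))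
    (hle : ∀ y ∈ t, #{x ∈ s | f x = y} ≤ c y) (hsum : ∑ y ∈ t, c y = #s) :
    IsAssignment s t r c f := by
  refine ⟨hf, (sum_eq_sum_iff_of_le hle).1 ?_⟩
  rw [hsum, card_eq_sum_card_fiberwise fun x hx => (hf x hx).1]

theorem exists_card_filter_le_of_hall [DecidableEq β] [DecidableRel r] [Nonempty β]
    (hall : ∀ u ⊆ s, #u ≤ ∑ y ∈ t with ∃ x ∈ u, r x y, c y) :
    ∃ f : α → β, (∀ x ∈ s, f x ∈ t ∧ r x (f x)) ∧ ∀ y ∈ t, #{x ∈ s | f x = y} ≤ c y := by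
  -- split each `y` into the `c y` slots `⟨y, i⟩`, `i < c y`, and match `s` injectively into slots
  let slots : Finset β → Finset (Σ _ : β, ℕ) := fun u => u.sigma fun y => range (c y)
  have card_slots : ∀ u, #(slots u) = ∑ y ∈ u, c y := fun u => by simp [slots]
  obtain ⟨g, hg_inj, hg⟩ := (all_card_le_biUnion_card_iff_exists_injective
      fun x : s => slots {y ∈ t | r x y}).1 fun u => by
    have hu : u.biUnion (fun x : s => slots {y ∈ t | r x y}) =
        slots {y ∈ t | ∃ x ∈ u.map (Function.Embedding.subtype _), r x y} := by
      ext ⟨y, i⟩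
      simp only [mem_biUnion, mem_sigma, mem_filter, mem_range, mem_map, Subtype.exists,
        Function.Embedding.subtype_apply, exists_and_right, exists_eq_right, slots]
      tauto
    rw [hu, card_slots, ← card_map (Function.Embedding.subtype _)]
    exact hall _ fun x hx => map_subtype_subset (t := (s : Set α)) u hx
  let G : α → Σ _ : β, ℕ := fun x => if hx : x ∈ s then g ⟨x, hx⟩ else ⟨Classical.arbitrary β, 0⟩
  have hG : ∀ x (hx : x ∈ s), G x = g ⟨x, hx⟩ := fun x hx => dif_pos hx
  have hGs : ∀ x ∈ s, (G x).1 ∈ t ∧ r x (G x).1 ∧ (G x).2 < c (G x).1 := fun x hx => by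
    simpa [hG x hx, slots, and_assoc] using hg ⟨x, hx⟩
  refine ⟨fun x => (G x).1, fun x hx => ⟨(hGs x hx).1, (hGs x hx).2.1⟩, fun y _ => ?_⟩
  calc #{x ∈ s | (G x).1 = y} ≤ #(slots {y}) := by
        refine card_le_card_of_injOn G (fun x hx => ?_) fun x hx x' hx' hxx' => ?_
        · obtain ⟨hxs, rfl⟩ := mem_filter.1 (mem_coe.1 hx)
          exact mem_sigma.2 ⟨mem_singleton_self _, mem_range.2 (hGs x hxs).2.2⟩
        · have hx := (mem_filter.1 (mem_coe.1 hx)).1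
          have hx' := (mem_filter.1 (mem_coe.1 hx')).1
          exact congrArg Subtype.val (hg_inj ((hG x hx).symm.trans (hxx'.trans (hG x' hx'))))
    _ = c y := by simp [card_slots]

def HasSurplus (s : Finset α) (t : Finset β) (r : α → β → Prop) [DecidableRel r] (c : β → ℕ) :
    Prop :=
  ∀ A ⊆ t, A.Nonempty → A ≠ t → ∑ y ∈ A, c y < #{x ∈ s | ∃ y ∈ A, r x y}

lemma HasSurplus.card_lt_sum [DecidableRel r] (h : HasSurplus s t r c) (hsum : ∑ y ∈ t, c y = #s)
    (hcover : ∀ x ∈ s, ∃ y ∈ t, r x y) {u : Finset α} (hu : u ⊆ s) (hu₀ : u.Nonempty)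
    (hN : {y ∈ t | ∃ x ∈ u, r x y} ≠ t) : #u < ∑ y ∈ t with ∃ x ∈ u, r x y, c y := by
  set N := {y ∈ t | ∃ x ∈ u, r x y}
  have hNt : N ⊆ t := filter_subset _ _
  have hN₀ : N.Nonempty := by
    obtain ⟨x, hx⟩ := hu₀
    obtain ⟨y, hy, hxy⟩ := hcover x (hu hx)
    exact ⟨y, mem_filter.2 ⟨hy, x, hx, hxy⟩⟩
  have hA := h (t \ N) sdiff_subset (sdiff_nonempty.2 fun h => hN (hNt.antisymm h))
    fun h => by
      obtain ⟨y, hy⟩ := hN₀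
      exact (mem_sdiff.1 (h.symm ▸ hNt hy : y ∈ t \ N)).2 hy
  have hdisj : Disjoint u {x ∈ s | ∃ y ∈ t \ N, r x y} := by
    refine disjoint_left.2 fun x hx hx' => ?_
    obtain ⟨y, hy, hxy⟩ := (mem_filter.1 hx').2
    exact (mem_sdiff.1 hy).2 (mem_filter.2 ⟨(mem_sdiff.1 hy).1, x, hx, hxy⟩)
  -- `#u + #{x ∈ s | x meets t \ N} ≤ #s = ∑_{t \ N} c + ∑_N c`, and `h` at `t \ N` bounds
  -- the second summand on the left from below
  have hcard := card_union_of_disjoint hdisj ▸ card_le_card (union_subset hu (filter_subset _ s))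
  have := sum_sdiff hNt (f := c)
  omega

lemma sum_eq_sum_tsub_single_add [DecidableEq β] {y₀ : β} (hc : 0 < c y₀) (u : Finset β) :
    ∑ y ∈ u, c y = ∑ y ∈ u, (c - Pi.single y₀ 1 : β → ℕ) y + if y₀ ∈ u then 1 else 0 := by
  rw [← sum_pi_single', ← sum_add_distrib]
  refine sum_congr rfl fun y _ => ?_
  rcases eq_or_ne y y₀ with rfl | hy
  · simp only [Pi.sub_apply, Pi.single_eq_same]
    omega
  · simp [hy]

lemma HasSurplus.card_le_sum_tsub_single [DecidableEq β] [DecidableRel r]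
    (h : HasSurplus s t r c) (hsum : ∑ y ∈ t, c y = #s) (hcover : ∀ x ∈ s, ∃ y ∈ t, r x y)
    {x₀ : α} {y₀ : β} (hx₀ : x₀ ∈ s) (hy₀ : y₀ ∈ t) (hc : 0 < c y₀) {u : Finset α}
    (hu : u ⊆ s.erase x₀) :
    #u ≤ ∑ y ∈ t with ∃ x ∈ u, r x y, (c - Pi.single y₀ 1 : β → ℕ) y := by
  rcases u.eq_empty_or_nonempty with rfl | hu₀
  · simp
  have hc' := sum_eq_sum_tsub_single_add hc
  by_cases hN : {y ∈ t | ∃ x ∈ u, r x y} = t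
  · have hus := card_erase_of_mem hx₀ ▸ card_le_card hu
    have hct := hc' t
    rw [if_pos hy₀] at hct
    rw [hN]
    omega
  · have hlt := h.card_lt_sum hsum hcover (hu.trans (erase_subset _ _)) hu₀ hN
    have hcN := hc' {y ∈ t | ∃ x ∈ u, r x y}
    split_ifs at hcN <;> omega

theorem HasSurplus.exists_isAssignment_apply_eq [DecidableEq β] [DecidableRel r]
    (h : HasSurplus s t r c) (hsum : ∑ y ∈ t, c y = #s) (hcover : ∀ x ∈ s, ∃ y ∈ t, r x y)
    {x₀ : α} {y₀ : β} (hx₀ : x₀ ∈ s) (hy₀ : y₀ ∈ t) (hr : r x₀ y₀) (hc : 0 < c y₀) :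
    ∃ f, IsAssignment s t r c f ∧ f x₀ = y₀ := by
  -- match `s.erase x₀` into the places left after removing one place of `y₀`,
  -- then send `x₀` to `y₀`
  have : Nonempty β := ⟨y₀⟩
  obtain ⟨f', hf't, hf'c⟩ := exists_card_filter_le_of_hall (s := s.erase x₀)
    fun u hu => h.card_le_sum_tsub_single hsum hcover hx₀ hy₀ hc hu
  refine ⟨Function.update f' x₀ y₀,
    isAssignment_of_card_le (fun x hx => ?_) (fun y hy => ?_) hsum, Function.update_self _ _ _⟩
  · rcases eq_or_ne x x₀ with rfl | hx'
    · simpa using ⟨hy₀, hr⟩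
    · simpa [hx'] using hf't x (mem_erase.2 ⟨hx', hx⟩)
  · have hfilter : {x ∈ s.erase x₀ | Function.update f' x₀ y₀ x = y} =
        {x ∈ s.erase x₀ | f' x = y} :=
      filter_congr fun x hx => by rw [Function.update_of_ne (ne_of_mem_erase hx)]
    have hcy := sum_eq_sum_tsub_single_add hc {y}
    have hf'y := hf'c y hy
    simp only [sum_singleton, mem_singleton] at hcy
    rw [← insert_erase hx₀, filter_insert, Function.update_self, hfilter]
    split_ifs at hcy ⊢
    · exact (card_insert_le _ _).trans (by omega)
    · omega

theorem hasSurplus_iff_forall_exists_filter_ne [DecidableEq β] [DecidableRel r]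
    (hsum : ∑ y ∈ t, c y = #s)
    (hc : ∀ y ∈ t, 0 < c y) (hcover : ∀ x ∈ s, ∃ y ∈ t, r x y) :
    HasSurplus s t r c ↔ ∀ A ⊆ t, A.Nonempty → A ≠ t → ∃ f₁ f₂ : α → β,
      IsAssignment s t r c f₁ ∧ IsAssignment s t r c f₂ ∧
        {x ∈ s | f₁ x ∈ A} ≠ {x ∈ s | f₂ x ∈ A} := by
  constructor
  · intro h A hA hA₀ hAt
    obtain ⟨y, hy⟩ := hA₀
    obtain ⟨x₀, hx₀⟩ : s.Nonempty :=
      card_pos.1 (hsum ▸ (hc y (hA hy)).trans_le (single_le_sum (fun _ _ => Nat.zero_le _) (hA hy)))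
    obtain ⟨y₀, hy₀, hr₀⟩ := hcover x₀ hx₀
    obtain ⟨f₁, hf₁, -⟩ := h.exists_isAssignment_apply_eq hsum hcover hx₀ hy₀ hr₀ (hc y₀ hy₀)
    obtain ⟨x, hxA, hx₁⟩ := exists_mem_notMem_of_card_lt_card
      ((hf₁.card_filter_mem hA).trans_lt (h A hA ⟨y, hy⟩ hAt))
    obtain ⟨hxs, y', hy', hr⟩ := mem_filter.1 hxA
    obtain ⟨f₂, hf₂, hx₂⟩ :=
      h.exists_isAssignment_apply_eq hsum hcover hxs (hA hy') hr (hc y' (hA hy'))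
    exact ⟨f₁, f₂, hf₁, hf₂, fun heq => hx₁ (heq ▸ mem_filter.2 ⟨hxs, hx₂ ▸ hy'⟩)⟩
  · intro h A hA hA₀ hAt
    obtain ⟨f₁, f₂, hf₁, hf₂, hne⟩ := h A hA hA₀ hAt
    obtain ⟨x, hx₂, hx₁⟩ := not_subset.1 fun hsub => hne <| (eq_of_subset_of_card_le hsub
      (by rw [hf₁.card_filter_mem hA, hf₂.card_filter_mem hA])).symm
    calc ∑ y ∈ A, c y = #{x ∈ s | f₁ x ∈ A} := (hf₁.card_filter_mem hA).symm
      _ < #(insert x {x ∈ s | f₁ x ∈ A}) := by rw [card_insert_of_notMem hx₁]; omega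
      _ ≤ _ := card_le_card (insert_subset (hf₂.filter_mem_subset A hx₂) (hf₁.filter_mem_subset A))

end Assignment

lemma exists_inter_nonempty_of_mem_cyclesOf {k : ℕ} {σ : Perm (Fin k)} (τ : Perm (Fin k))
    {d : Finset (Fin k)} (hd : d ∈ cyclesOf σ) : ∃ e ∈ cyclesOf τ, (d ∩ e).Nonempty := by
  obtain ⟨x, -, rfl⟩ := mem_image.1 hd
  exact ⟨orbitOf τ x, mem_image_of_mem _ (mem_univ x), x, by simp [orbitOf, Perm.SameCycle.refl]⟩

lemma meetCount_eq_card_filter {k : ℕ} (σ : Perm (Fin k)) (A : Finset (Finset (Fin k))) :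
    meetCount σ A = #{d ∈ cyclesOf σ | ∃ e ∈ A, (d ∩ e).Nonempty} := by
  simp only [meetCount, inter_biUnion, biUnion_nonempty, id]

theorem condition_e_iff_e2_general {k : ℕ} (σ₁ σ₂ : Perm (Fin k))
    (q : Finset (Fin k) → ℕ) (hq : ∀ c ∈ cyclesOf σ₂, 2 ≤ q c)
    (hsum : ∑ c ∈ cyclesOf σ₂, q c = (cyclesOf σ₁).card + (cyclesOf σ₂).card) :
    (∀ A ⊆ cyclesOf σ₂, A.Nonempty → A ≠ cyclesOf σ₂ →
        (∑ c ∈ A, ((q c : ℤ) - 1)) < (meetCount σ₁ A : ℤ)) ↔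
    (∀ A ⊆ cyclesOf σ₂, A.Nonempty → A ≠ cyclesOf σ₂ →
        ∃ M₁ M₂ : Finset (Fin k) → Finset (Fin k),
          IsMarriage σ₁ σ₂ q M₁ ∧ IsMarriage σ₁ σ₂ q M₂ ∧
          (cyclesOf σ₁).filter (fun d => M₁ d ∈ A) ≠
            (cyclesOf σ₁).filter (fun d => M₂ d ∈ A)) := by
  have hsum' : ∑ c ∈ cyclesOf σ₂, (q c - 1) = #(cyclesOf σ₁) := by
    rw [sum_tsub_distrib _ fun c hc => (one_le_two.trans (hq c hc)), hsum]
    simp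
  refine Iff.trans ?_ (hasSurplus_iff_forall_exists_filter_ne hsum'
    (fun c hc => by have := hq c hc; omega) fun d => exists_inter_nonempty_of_mem_cyclesOf σ₂)
  refine forall₄_congr fun A hA _ _ => ?_
  have hcast : ∑ c ∈ A, ((q c : ℤ) - 1) = ((∑ c ∈ A, (q c - 1) : ℕ) : ℤ) := by
    rw [Nat.cast_sum]
    exact sum_congr rfl fun c hc => by have := hq c (hA hc); omega
  rw [hcast, meetCount_eq_card_filter, Nat.cast_lt]

/-- Let `σ₁ σ₂ = (1,2,…,k)` and `q : C(σ₂) → {2,3,…}` with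
`∑_c q(c) = |C(σ₁)| + |C(σ₂)|`. Then condition (e): every non-trivial `A ⊂ C(σ₂)` is
intersected by more than `∑_{i∈A}(q(i)−1)` cycles of `σ₁`, is equivalent to condition
(e²): for every non-trivial `A ⊂ C(σ₂)` there are two marriage arrangements `M₁, M₂`
whose sets of husbands of wives from `A` differ. -/
theorem condition_e_iff_e2 {k : ℕ} (σ₁ σ₂ : Perm (Fin k))
    (hfact : σ₁ * σ₂ = finRotate k)
    (q : Finset (Fin k) → ℕ) (hq : ∀ c ∈ cyclesOf σ₂, 2 ≤ q c)
    (hsum : ∑ c ∈ cyclesOf σ₂, q c = (cyclesOf σ₁).card + (cyclesOf σ₂).card) :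
    (∀ A ⊆ cyclesOf σ₂, A.Nonempty → A ≠ cyclesOf σ₂ →
        (∑ c ∈ A, ((q c : ℤ) - 1)) < (meetCount σ₁ A : ℤ)) ↔
    (∀ A ⊆ cyclesOf σ₂, A.Nonempty → A ≠ cyclesOf σ₂ →
        ∃ M₁ M₂ : Finset (Fin k) → Finset (Fin k),
          IsMarriage σ₁ σ₂ q M₁ ∧ IsMarriage σ₁ σ₂ q M₂ ∧
          (cyclesOf σ₁).filter (fun d => M₁ d ∈ A) ≠
            (cyclesOf σ₁).filter (fun d => M₂ d ∈ A)) :=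
  condition_e_iff_e2_general σ₁ σ₂ q hq hsum
end

section
/- With the same setup of moments M_n and free cumulants R_n of a formal Cauchy transform, for every n ≥ 1: M_n = ∑_{l≥1} (1/l!) (n)_{l−1} ∑_{k₁+⋯+k_l=n, k_i≥1} R_{k₁}⋯R_{k_l}, where (n)_{l−1} = n(n−1)⋯(n−l+2) is a falling factorial. -/
/-!
With `B = w A`, the hypothesis says `B = w φ(B)` for `φ(u) = 1 + ∑_{n≥1} R_n uⁿ`, so Lagrange
inversion gives `(n + 1) M_n = [uⁿ] φ^{n+1}`. Writing `φ = 1 + ψ`, the binomial theorem turns this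
into `∑_l C(n+1, l) [uⁿ] ψˡ`, where `[uⁿ] ψˡ` is the composition sum and
`C(n+1, l) / (n+1) = (n)_{l-1} / l!`.

Lagrange inversion is proved without substitution or residues, through the stronger identity
`[w^m] Bᵏ B' = [u^{m-k}] φ^{m+1}` for `k ≤ m`, by induction on `m`: for `k ≥ 1` it follows from
`B^{k+1} B' = w Bᵏ B' φ(B)` and `φ^{m+2} = φ φ^{m+1}`; for `k = 0` one expands `[w^{m+1}] B'`
through `A = φ(B)` and compares with the derivative of `φ^{m+2}`.
-/

open Finset PowerSeries

/-- `compSum R l n = ∑_{k₁+⋯+k_l = n, kᵢ ≥ 1} R_{k₁} ⋯ R_{k_l}`. -/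
noncomputable def compSum (R : ℕ → ℝ) (l n : ℕ) : ℝ :=
  ∑ c ∈ (Finset.Nat.antidiagonalTuple l n).filter (fun c => ∀ i, 1 ≤ c i),
    ∏ i, R (c i)

theorem Finset.sum_range_succ_eq_add_sum_Icc {M : Type*} [AddCommMonoid M] (f : ℕ → M) (n : ℕ) :
    ∑ i ∈ range (n + 1), f i = f 0 + ∑ i ∈ Icc 1 n, f i := by
  rw [range_eq_Ico, sum_eq_sum_Ico_succ_bot (Nat.zero_lt_succ n), zero_add,
    Nat.succ_eq_add_one, Ico_add_one_right_eq_Icc]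

namespace PowerSeries

section CommSemiring

variable {K : Type*} [CommSemiring K]

theorem coeff_X_mul_pow_mul_of_lt (f g : K⟦X⟧) {m k : ℕ} (h : m < k) :
    coeff m ((X * f) ^ k * g) = 0 := by
  rw [mul_pow, mul_assoc, coeff_X_pow_mul', if_neg (by omega)]

theorem coeff_X_mul_pow_of_lt (f : K⟦X⟧) {m k : ℕ} (h : m < k) : coeff m ((X * f) ^ k) = 0 := by
  simpa using coeff_X_mul_pow_mul_of_lt f 1 h

theorem coeff_pow_eq_sum_antidiagonalTuple (f : K⟦X⟧) (l n : ℕ) :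
    coeff n (f ^ l) = ∑ t ∈ Finset.Nat.antidiagonalTuple l n, ∏ i, coeff (t i) f := by
  rw [← Fin.prod_const, coeff_prod, ← piAntidiag_univ_fin_eq_antidiagonalTuple]
  exact sum_equiv Finsupp.equivFunOnFinite (by simp) (by simp)

theorem coeff_pow_mul_derivative (f : K⟦X⟧) (k m : ℕ) :
    (k + 1 : K) * coeff m (f ^ k * d⁄dX K f) = (m + 1) * coeff (m + 1) (f ^ (k + 1)) := by
  have h := congrArg (coeff m) ((d⁄dX K).leibniz_pow f (k + 1))
  rw [coeff_derivative, add_tsub_cancel_right, smul_eq_mul, map_nsmul, nsmul_eq_mul] at h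
  push_cast at h
  rw [← h, mul_comm]

theorem mul_coeff_succ_pow_succ (f : K⟦X⟧) (k m : ℕ) :
    (m + 1 : K) * coeff (m + 1) (f ^ (k + 1)) =
      (k + 1) * ∑ n ∈ range (m + 2), n * coeff n f * coeff (m + 1 - n) (f ^ k) := by
  rw [← coeff_pow_mul_derivative, mul_comm (f ^ k), PowerSeries.coeff_mul,
    Nat.sum_antidiagonal_eq_sum_range_succ (fun i j => coeff i (d⁄dX K f) * coeff j (f ^ k)),
    sum_range_succ' _ (m + 1)]
  simp only [coeff_derivative, Nat.cast_zero, zero_mul, add_zero, Nat.cast_add, Nat.cast_one]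
  congr 1
  refine sum_congr rfl fun i _ => ?_
  rw [Nat.add_sub_add_right]
  ring

/-- The Lagrange equation `A = φ(X A)`, stated coefficientwise: `(X A)ⁿ` does not contribute to
the `m`-th coefficient once `n > m`, so no substitution of power series is needed. -/
def SolvesLagrange (φ A : K⟦X⟧) : Prop :=
  ∀ m, coeff m A = ∑ n ∈ range (m + 1), coeff n φ * coeff m ((X * A) ^ n)

namespace SolvesLagrange

variable {φ A : K⟦X⟧}

theorem coeff_eq_sum_range (h : SolvesLagrange φ A) {j m : ℕ} (hj : j ≤ m) :
    coeff j A = ∑ n ∈ range (m + 1), coeff n φ * coeff j ((X * A) ^ n) := by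
  rw [h j]
  refine sum_subset (range_subset_range.2 (by omega)) fun n _ hn => ?_
  rw [coeff_X_mul_pow_of_lt A (by simp at hn; omega), mul_zero]

theorem coeff_mul (h : SolvesLagrange φ A) (C : K⟦X⟧) (m : ℕ) :
    coeff m (C * A) = ∑ n ∈ range (m + 1), coeff n φ * coeff m (C * (X * A) ^ n) := by
  simp_rw [PowerSeries.coeff_mul, mul_sum]
  rw [sum_comm]
  refine sum_congr rfl fun p hp => ?_
  rw [h.coeff_eq_sum_range (HasAntidiagonal.antidiagonal.snd_le hp), mul_sum]
  exact sum_congr rfl fun n _ => by ring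

theorem coeff_succ_pow_succ_mul_derivative (h : SolvesLagrange φ A) (m k : ℕ) :
    coeff (m + 1) ((X * A) ^ (k + 1) * d⁄dX K (X * A)) =
      ∑ n ∈ range (m + 1), coeff n φ * coeff m ((X * A) ^ (k + n) * d⁄dX K (X * A)) := by
  have hX : (X * A) ^ (k + 1) * d⁄dX K (X * A) = X * ((X * A) ^ k * d⁄dX K (X * A) * A) := by
    ring
  rw [hX, coeff_succ_X_mul, h.coeff_mul]
  refine sum_congr rfl fun n _ => ?_
  rw [pow_add]
  ring_nf

theorem coeff_pow_succ_mul_derivative_of_le (h : SolvesLagrange φ A) {m : ℕ}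
    (ih : ∀ k ≤ m, coeff m ((X * A) ^ k * d⁄dX K (X * A)) = coeff (m - k) (φ ^ (m + 1)))
    {k : ℕ} (hk : k ≤ m) :
    coeff (m + 1) ((X * A) ^ (k + 1) * d⁄dX K (X * A)) = coeff (m - k) (φ ^ (m + 2)) := by
  rw [h.coeff_succ_pow_succ_mul_derivative, pow_succ', PowerSeries.coeff_mul,
    Nat.sum_antidiagonal_eq_sum_range_succ (fun i j => coeff i φ * coeff j (φ ^ (m + 1)))]
  have hvanish : ∀ n ∈ range (m + 1), n ∉ range (m - k + 1) →
      coeff n φ * coeff m ((X * A) ^ (k + n) * d⁄dX K (X * A)) = 0 := by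
    intro n _ hn
    rw [coeff_X_mul_pow_mul_of_lt _ _ (by simp at hn; omega), mul_zero]
  rw [← sum_subset (range_subset_range.2 (by omega)) hvanish]
  refine sum_congr rfl fun n hn => ?_
  rw [ih (k + n) (by simp at hn; omega), Nat.sub_sub]

theorem coeff_succ_derivative (h : SolvesLagrange φ A) [IsAddTorsionFree K] {m : ℕ}
    (ih : ∀ k ≤ m, coeff m ((X * A) ^ k * d⁄dX K (X * A)) = coeff (m - k) (φ ^ (m + 1))) :
    coeff (m + 1) (d⁄dX K (X * A)) = coeff (m + 1) (φ ^ (m + 2)) := by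
  have hpow : ∀ n ∈ range (m + 2),
      (m + 1 : K) * coeff (m + 1) ((X * A) ^ n) = n * coeff (m + 1 - n) (φ ^ (m + 1)) := by
    rintro (_ | i) hi
    · simp
    · rw [← coeff_pow_mul_derivative, ih i (by simp at hi; omega), Nat.add_sub_add_right]
      push_cast
      rfl
  apply IsAddTorsionFree.nsmul_right_injective m.succ_ne_zero
  simp only [nsmul_eq_mul, Nat.cast_succ]
  calc (m + 1 : K) * coeff (m + 1) (d⁄dX K (X * A))
      = (m + 1 + 1) * ∑ n ∈ range (m + 2), coeff n φ * ((m + 1) * coeff (m + 1) ((X * A) ^ n)) := by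
        rw [coeff_derivative, coeff_succ_X_mul, h]
        simp only [mul_sum, sum_mul]
        push_cast
        exact sum_congr rfl fun _ _ => by ring
    _ = (m + 1 + 1) * ∑ n ∈ range (m + 2), n * coeff n φ * coeff (m + 1 - n) (φ ^ (m + 1)) := by
        congr 1
        exact sum_congr rfl fun n hn => by rw [hpow n hn]; ring
    _ = (m + 1) * coeff (m + 1) (φ ^ (m + 2)) := by
        rw [mul_coeff_succ_pow_succ]; push_cast; ring

theorem coeff_pow_mul_derivative_eq (h : SolvesLagrange φ A) [IsAddTorsionFree K] {m k : ℕ}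
    (hk : k ≤ m) : coeff m ((X * A) ^ k * d⁄dX K (X * A)) = coeff (m - k) (φ ^ (m + 1)) := by
  induction m generalizing k with
  | zero =>
    obtain rfl : k = 0 := by omega
    simpa [coeff_derivative] using h 0
  | succ m ih =>
    rcases k with _ | k
    · simpa using h.coeff_succ_derivative fun k hk => ih hk
    · simpa using h.coeff_pow_succ_mul_derivative_of_le (fun k hk => ih hk) (by omega)

theorem lagrange_inversion (h : SolvesLagrange φ A) [IsAddTorsionFree K] (n : ℕ) :
    (n + 1 : K) * coeff n A = coeff n (φ ^ (n + 1)) := by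
  have := h.coeff_pow_mul_derivative_eq (Nat.zero_le n)
  rw [pow_zero, one_mul, coeff_derivative, coeff_succ_X_mul, Nat.sub_zero] at this
  rw [← this, mul_comm]

end SolvesLagrange

end CommSemiring

end PowerSeries

theorem Nat.cast_choose_succ_div_succ {K : Type*} [Field K] [CharZero K] {n l : ℕ} (hl : 1 ≤ l) :
    ((n + 1).choose l : K) / (n + 1) = n.descFactorial (l - 1) / l.factorial := by
  obtain ⟨k, rfl⟩ : ∃ k, l = k + 1 := ⟨l - 1, by omega⟩
  have h : (n + 1).choose (k + 1) * (k + 1).factorial = (n + 1) * n.descFactorial k := by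
    rw [← Nat.succ_descFactorial_succ, Nat.descFactorial_eq_factorial_mul_choose, mul_comm]
  rw [Nat.add_sub_cancel, div_eq_div_iff (Nat.cast_add_one_ne_zero n)
    (Nat.cast_ne_zero.2 (Nat.factorial_ne_zero _))]
  exact_mod_cast h.trans (mul_comm _ _)

noncomputable def cumulantSeries (R : ℕ → ℝ) : ℝ⟦X⟧ := X * PowerSeries.mk fun n => R (n + 1)

theorem coeff_cumulantSeries (R : ℕ → ℝ) (n : ℕ) :
    coeff n (cumulantSeries R) = if n = 0 then 0 else R n := by
  cases n <;> simp [cumulantSeries, coeff_succ_X_mul]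

theorem compSum_eq_coeff_pow (R : ℕ → ℝ) (l n : ℕ) :
    compSum R l n = coeff n (cumulantSeries R ^ l) := by
  rw [coeff_pow_eq_sum_antidiagonalTuple, compSum, sum_filter]
  refine sum_congr rfl fun t _ => ?_
  split_ifs with ht
  · exact prod_congr rfl fun i _ => by rw [coeff_cumulantSeries, if_neg (by have := ht i; omega)]
  · simp only [not_forall, not_le, Nat.lt_one_iff] at ht
    obtain ⟨i, hi⟩ := ht
    exact (prod_eq_zero (mem_univ i) (by rw [coeff_cumulantSeries, if_pos hi])).symm

theorem coeff_one_add_cumulantSeries_pow (R : ℕ → ℝ) {n : ℕ} (hn : 1 ≤ n) :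
    coeff n ((1 + cumulantSeries R) ^ (n + 1)) =
      ∑ l ∈ Icc 1 n, ((n + 1).choose l : ℝ) * compSum R l n := by
  rw [add_comm, add_pow, map_sum, sum_range_succ, sum_range_succ_eq_add_sum_Icc]
  have hlast : coeff n (cumulantSeries R ^ (n + 1)) = 0 := coeff_X_mul_pow_of_lt _ n.lt_succ_self
  simp only [one_pow, mul_one, ← map_natCast (C (R := ℝ)), coeff_mul_C, pow_zero, coeff_one,
    if_neg (show n ≠ 0 by omega), hlast, zero_mul, zero_add, add_zero, compSum_eq_coeff_pow]
  exact sum_congr rfl fun _ _ => mul_comm _ _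

/-- `A(w) = ∑ M_n wⁿ` is `G` read in `w = 1/z` (`G(z) = w A(w)`), and `G(R(z) + 1/z) = z`
becomes `A = 1 + ∑_{n≥1} R_n (w A)ⁿ`, imposed coefficientwise in `hR`. -/
theorem moment_cumulant_formula_general (M R : ℕ → ℝ)
    (hR : ∀ m : ℕ, coeff m (PowerSeries.mk M) =
      (if m = 0 then 1 else 0) +
        ∑ n ∈ Finset.Icc 1 m, R n * coeff m ((X * PowerSeries.mk M) ^ n)) :
    ∀ n : ℕ, 1 ≤ n →
      M n = ∑ l ∈ Finset.Icc 1 n,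
        ((n.descFactorial (l - 1) : ℝ) / (Nat.factorial l)) * compSum R l n := by
  intro n hn
  have hlag : SolvesLagrange (1 + cumulantSeries R) (PowerSeries.mk M) := by
    intro m
    rw [hR m, sum_range_succ_eq_add_sum_Icc]
    congr 1
    · simp [coeff_one, cumulantSeries]
    · refine sum_congr rfl fun k hk => ?_
      have hk0 : k ≠ 0 := Nat.one_le_iff_ne_zero.1 (mem_Icc.1 hk).1
      simp [coeff_one, coeff_cumulantSeries, hk0]
  have hmoment : ((n : ℝ) + 1) * M n = ∑ l ∈ Icc 1 n, ((n + 1).choose l : ℝ) * compSum R l n := by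
    rw [← coeff_one_add_cumulantSeries_pow R hn, ← hlag.lagrange_inversion, coeff_mk]
  rw [eq_div_of_mul_eq (Nat.cast_add_one_ne_zero n) ((mul_comm _ _).trans hmoment), sum_div]
  refine sum_congr rfl fun l hl => ?_
  rw [mul_div_right_comm, Nat.cast_choose_succ_div_succ (mem_Icc.1 hl).1]

/-- The free moment-cumulant formula in closed summation form:
`M_n = ∑_{l≥1} (1/l!) (n)_{l−1} ∑_{k₁+⋯+k_l=n, kᵢ≥1} R_{k₁}⋯R_{k_l}`. Here
`A(w) = ∑_{n≥0} M_n wⁿ` (so that `G(z) = ∑ M_n z^{-(n+1)}` with `w = 1/z`), `M₀ = 1`,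
and the free cumulants `R_n` are encoded by the compositional inverse relation
`A = 1 + ∑_{n≥1} R_n (w·A)^n`, i.e. `G(R(z) + 1/z) = z`. -/
theorem moment_cumulant_formula (M R : ℕ → ℝ)
    (hM0 : M 0 = 1)
    (hR : ∀ m : ℕ, coeff m (PowerSeries.mk M) =
      (if m = 0 then 1 else 0) +
        ∑ n ∈ Finset.Icc 1 m, R n * coeff m ((X * PowerSeries.mk M) ^ n)) :
    ∀ n : ℕ, 1 ≤ n →
      M n = ∑ l ∈ Finset.Icc 1 n,
        ((n.descFactorial (l - 1) : ℝ) / (Nat.factorial l)) * compSum R l n :=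
  moment_cumulant_formula_general M R hR
end
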